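/- arXiv:0803.4252 — 4 statements merged into one kernel-verified Lean document; each statement's English description precedes it below -/
import Mathlib

section
/- Let (X, d) be a compact metric space and n ≥ 1. Then the function d̂_n : I(X) × I(X) → ℝ is continuous, where I(X) carries the weak* topology. Equivalently, if a sequence (μ_i) in I(X) converges to μ in the weak* topology and ν_i → ν in the weak* topology, then d̂_n(μ_i, ν_i) → d̂_n(μ, ν); in particular there is no sequence μ_i → μ with d̂_n(μ_i, μ) bounded away from 0. -/
/-- An idempotent (Maslov) probability measure on a topological space `X` is a functional
`μ : C(X, ℝ) → ℝ` that is normalized on constants, shifts under addition of constants, and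
turns pointwise maxima into maxima. -/
def IsIdemMeasure {X : Type*} [TopologicalSpace X] (μ : C(X, ℝ) → ℝ) : Prop :=
  (∀ c : ℝ, μ (ContinuousMap.const X c) = c) ∧
  (∀ (c : ℝ) (φ : C(X, ℝ)), μ (ContinuousMap.const X c + φ) = c + μ φ) ∧
  (∀ φ ψ : C(X, ℝ), μ (φ ⊔ ψ) = max (μ φ) (μ ψ))

/-- The space `I(X)` of idempotent probability measures on `X`; as a subtype of the product
`(C(X, ℝ) → ℝ)` it automatically carries the weak* (pointwise convergence) topology. -/
abbrev IdemMeasure (X : Type*) [TopologicalSpace X] :=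
  {μ : C(X, ℝ) → ℝ // IsIdemMeasure μ}

/-- `n-LIP(X, d)`: the continuous functions that are Lipschitz with constant `n`. -/
def nLip (X : Type*) [MetricSpace X] (n : ℕ) : Set C(X, ℝ) :=
  {φ | ∀ x y : X, |φ x - φ y| ≤ (n : ℝ) * dist x y}

/-- The pseudometric `d̂ₙ(μ, ν) = sup { |μ(φ) − ν(φ)| : φ ∈ n-LIP(X, d) }`. -/
noncomputable def dHat {X : Type*} [MetricSpace X] (n : ℕ) (μ ν : C(X, ℝ) → ℝ) : ℝ :=
  sSup {r : ℝ | ∃ φ ∈ nLip X n, r = |μ φ - ν φ|}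

open Filter Topology

/-!
An idempotent probability measure is monotone and commutes with adding constants, hence is
`1`-Lipschitz for the sup norm; so `(μ, φ) ↦ μ φ` is jointly continuous on `I(X) × C(X)`.
Subtracting `φ x₀` from `φ` does not change `μ φ - ν φ`, so `d̂ₙ(μ, ν)` is the supremum of
`|μ φ - ν φ|` over the `n`-Lipschitz `φ` vanishing at `x₀`, a compact set by Arzelà–Ascoli.
A supremum over a compact set of a jointly continuous function is continuous.
-/

open NNReal

namespace IsIdemMeasure

variable {X : Type*} [TopologicalSpace X] {μ : C(X, ℝ) → ℝ}

theorem monotone (hμ : IsIdemMeasure μ) : Monotone μ := fun φ ψ hle => by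
  simpa [sup_eq_right.mpr hle] using (hμ.2.2 φ ψ).ge

theorem map_sub_const (hμ : IsIdemMeasure μ) (φ : C(X, ℝ)) (c : ℝ) :
    μ (φ - ContinuousMap.const X c) = μ φ - c := by
  have h := hμ.2.1 c (φ - ContinuousMap.const X c)
  rw [add_sub_cancel] at h
  linarith

theorem nonempty (hμ : IsIdemMeasure μ) : Nonempty X := by
  by_contra hX
  have hconst : ContinuousMap.const X (0 : ℝ) = ContinuousMap.const X 1 :=
    ContinuousMap.ext fun x => (hX ⟨x⟩).elim
  have h := hμ.1 0
  rw [hconst, hμ.1 1] at h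
  norm_num at h

theorem lipschitzWith_one [CompactSpace X] (hμ : IsIdemMeasure μ) : LipschitzWith 1 μ := by
  refine LipschitzWith.of_le_add_mul 1 fun φ ψ => ?_
  have hle : φ ≤ ContinuousMap.const X (dist φ ψ) + ψ := fun x => by
    have h : φ x - ψ x ≤ dist φ ψ := (le_abs_self _).trans
      ((Real.dist_eq _ _).symm.trans_le (ContinuousMap.dist_apply_le_dist x))
    show φ x ≤ dist φ ψ + ψ x
    linarith
  have h := hμ.monotone hle
  rw [hμ.2.1] at h
  simp only [NNReal.coe_one, one_mul]
  linarith

end IsIdemMeasure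

section

variable {X : Type*} [MetricSpace X]

theorem mem_nLip_iff {n : ℕ} {φ : C(X, ℝ)} : φ ∈ nLip X n ↔ LipschitzWith n φ := by
  simp only [nLip, Set.mem_ofPred_eq, lipschitzWith_iff_dist_le_mul, Real.dist_eq,
    NNReal.coe_natCast]

theorem dHat_self (n : ℕ) (μ : C(X, ℝ) → ℝ) : dHat n μ μ = 0 := by
  have hset : {r : ℝ | ∃ φ ∈ nLip X n, r = |μ φ - μ φ|} = {0} := by
    ext r
    simp only [sub_self, abs_zero, Set.mem_ofPred_eq, Set.mem_singleton_iff]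
    exact ⟨fun ⟨_, _, hr⟩ => hr, fun hr => ⟨0, mem_nLip_iff.2 (LipschitzWith.const' 0), hr⟩⟩
  rw [dHat, hset, csSup_singleton]

theorem dHat_eq_sSup_image {n : ℕ} {μ ν : C(X, ℝ) → ℝ} (hμ : IsIdemMeasure μ)
    (hν : IsIdemMeasure ν) (x₀ : X) :
    dHat n μ ν = sSup ((fun φ => |μ φ - ν φ|) '' {φ | LipschitzWith n φ ∧ φ x₀ = 0}) := by
  rw [dHat]
  congr 1
  ext r
  constructor
  · rintro ⟨φ, hφ, rfl⟩
    refine ⟨φ - ContinuousMap.const X (φ x₀), ⟨?_, by simp⟩, ?_⟩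
    · exact LipschitzWith.of_dist_le_mul fun x y => by
        simpa [dist_sub_right] using (mem_nLip_iff.1 hφ).dist_le_mul x y
    · simp only [hμ.map_sub_const, hν.map_sub_const, sub_sub_sub_cancel_right]
  · rintro ⟨φ, ⟨hφ, -⟩, rfl⟩
    exact ⟨φ, mem_nLip_iff.2 hφ, rfl⟩

variable [CompactSpace X]

theorem isCompact_setOf_lipschitzWith_apply_eq_zero (K : ℝ≥0) (x₀ : X) :
    IsCompact {φ : C(X, ℝ) | LipschitzWith K φ ∧ φ x₀ = 0} := by
  set S := {f : X → ℝ | LipschitzWith K f ∧ f x₀ = 0}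
  have himage : ContinuousMap.toFun '' {φ : C(X, ℝ) | LipschitzWith K φ ∧ φ x₀ = 0} = S := by
    ext f
    refine ⟨?_, fun hf => ⟨⟨f, hf.1.continuous⟩, hf, rfl⟩⟩
    rintro ⟨φ, hφ, rfl⟩
    exact hφ
  have hbound :
      S ⊆ Set.univ.pi fun _ => Metric.closedBall 0 (K * Metric.diam (Set.univ : Set X)) :=
    fun f ⟨hf, hf₀⟩ x _ => by
      rw [Metric.mem_closedBall, ← hf₀]
      exact hf.dist_le_mul x x₀ |>.trans <| by
        gcongr; exact Metric.dist_le_diam_of_mem isCompact_univ.isBounded trivial trivial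
  apply ArzelaAscoli.isCompact_of_equicontinuous
  · rw [himage]
    exact (isCompact_univ_pi fun _ => isCompact_closedBall _ _).of_isClosed_subset
      ((isClosed_setOfPred_lipschitzWith K).inter (isClosed_eq (continuous_apply x₀)
        continuous_const)) hbound
  · exact (LipschitzWith.uniformEquicontinuous _ K fun φ => φ.2.1).equicontinuous

theorem continuous_idemMeasure_apply :
    Continuous fun q : IdemMeasure X × C(X, ℝ) => q.1.val q.2 :=
  (continuous_prod_of_continuous_lipschitzWith (fun q : C(X, ℝ) × IdemMeasure X => q.2.val q.1)
    1 (fun φ => (continuous_apply φ).comp continuous_subtype_val)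
    fun μ => μ.2.lipschitzWith_one).comp continuous_swap

theorem continuous_dHat (n : ℕ) :
    Continuous fun p : IdemMeasure X × IdemMeasure X => dHat n p.1.val p.2.val := by
  refine continuous_iff_continuousAt.2 fun p => ?_
  obtain ⟨x₀⟩ := p.1.2.nonempty
  have hsSup : (fun p : IdemMeasure X × IdemMeasure X => dHat n p.1.val p.2.val) =
      fun p => sSup ((fun φ : C(X, ℝ) => |p.1.val φ - p.2.val φ|) ''
        {φ : C(X, ℝ) | LipschitzWith n φ ∧ φ x₀ = 0}) :=
    funext fun p => dHat_eq_sSup_image p.1.2 p.2.2 x₀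
  have happly := continuous_idemMeasure_apply (X := X)
  rw [hsSup]
  refine ((isCompact_setOf_lipschitzWith_apply_eq_zero n x₀).continuous_sSup ?_).continuousAt
  exact ((happly.comp (continuous_fst.fst.prodMk continuous_snd)).sub
    (happly.comp (continuous_fst.snd.prodMk continuous_snd))).abs

end

theorem statement1_general {X : Type*} [MetricSpace X] [CompactSpace X] (n : ℕ) :
    Continuous (fun p : IdemMeasure X × IdemMeasure X => dHat n p.1.val p.2.val) ∧
    (∀ (μs νs : ℕ → IdemMeasure X) (μ ν : IdemMeasure X),
      Tendsto μs atTop (𝓝 μ) → Tendsto νs atTop (𝓝 ν) →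
      Tendsto (fun i => dHat n (μs i).val (νs i).val) atTop (𝓝 (dHat n μ.val ν.val))) ∧
    (∀ (μs : ℕ → IdemMeasure X) (μ : IdemMeasure X),
      Tendsto μs atTop (𝓝 μ) →
      ∀ c : ℝ, 0 < c → ¬ (∀ i : ℕ, c ≤ dHat n (μs i).val μ.val)) := by
  have hcont := continuous_dHat (X := X) n
  have hseq : ∀ (μs νs : ℕ → IdemMeasure X) (μ ν : IdemMeasure X),
      Tendsto μs atTop (𝓝 μ) → Tendsto νs atTop (𝓝 ν) →
      Tendsto (fun i => dHat n (μs i).val (νs i).val) atTop (𝓝 (dHat n μ.val ν.val)) :=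
    fun _ _ μ ν hμ hν => by
      have h := (hcont.tendsto (μ, ν)).comp (hμ.prodMk_nhds hν)
      exact h
  refine ⟨hcont, hseq, fun μs μ hμ c hc hge => ?_⟩
  have hzero := hseq μs (fun _ => μ) μ μ hμ tendsto_const_nhds
  rw [dHat_self] at hzero
  linarith [ge_of_tendsto' hzero hge]

/-- For a compact metric space `(X, d)` and `n ≥ 1`, the function
`d̂ₙ : I(X) × I(X) → ℝ` is continuous in the weak* topology; equivalently, it is sequentially
continuous, and in particular no sequence converging to `μ` can stay `d̂ₙ`-bounded away from
`μ`. -/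
theorem statement1 {X : Type*} [MetricSpace X] [CompactSpace X] (n : ℕ) (hn : 1 ≤ n) :
    Continuous (fun p : IdemMeasure X × IdemMeasure X => dHat n p.1.val p.2.val) ∧
    (∀ (μs νs : ℕ → IdemMeasure X) (μ ν : IdemMeasure X),
      Tendsto μs atTop (𝓝 μ) → Tendsto νs atTop (𝓝 ν) →
      Tendsto (fun i => dHat n (μs i).val (νs i).val) atTop (𝓝 (dHat n μ.val ν.val))) ∧
    (∀ (μs : ℕ → IdemMeasure X) (μ : IdemMeasure X),
      Tendsto μs atTop (𝓝 μ) →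
      ∀ c : ℝ, 0 < c → ¬ (∀ i : ℕ, c ≤ dHat n (μs i).val μ.val)) :=
  statement1_general n
end

section
/- Let f : (X, d) → (Y, ρ) be a nonexpanding continuous map of compact metric spaces (ρ(f(x), f(x')) ≤ d(x, x') for all x, x' ∈ X) and n ≥ 1. Then the induced map I(f) : I(X) → I(Y), defined by I(f)(μ)(φ) = μ(φ ∘ f) for φ ∈ C(Y), is nonexpanding from (I(X), d̂_n) to (I(Y), ρ̂_n): for all μ, ν ∈ I(X), ρ̂_n(I(f)(μ), I(f)(ν)) ≤ d̂_n(μ, ν). -/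
lemma idem_mono {X : Type*} [TopologicalSpace X] {μ : C(X, ℝ) → ℝ} (hμ : IsIdemMeasure μ)
    {φ ψ : C(X, ℝ)} (h : φ ≤ ψ) : μ φ ≤ μ ψ := by
  have h1 : φ ⊔ ψ = ψ := sup_eq_right.mpr h
  have := hμ.2.2 φ ψ
  rw [h1] at this
  rw [this]
  exact le_max_left _ _

lemma idem_between {X : Type*} [TopologicalSpace X] {μ : C(X, ℝ) → ℝ} (hμ : IsIdemMeasure μ)
    {φ : C(X, ℝ)} {a b : ℝ} (ha : ∀ x, a ≤ φ x) (hb : ∀ x, φ x ≤ b) :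
    a ≤ μ φ ∧ μ φ ≤ b := by
  constructor
  · have := idem_mono hμ (φ := ContinuousMap.const X a) (ψ := φ) (fun x => ha x)
    rwa [hμ.1] at this
  · have := idem_mono hμ (φ := φ) (ψ := ContinuousMap.const X b) (fun x => hb x)
    rwa [hμ.1] at this

/-- If `f : (X, d) → (Y, ρ)` is a nonexpanding continuous map of compact
metric spaces, then the induced map `I(f) : I(X) → I(Y)`, `I(f)(μ)(φ) = μ(φ ∘ f)`, is
nonexpanding from `(I(X), d̂ₙ)` to `(I(Y), ρ̂ₙ)` for every `n ≥ 1`. -/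
theorem statement4 {X Y : Type*} [MetricSpace X] [CompactSpace X]
    [MetricSpace Y] [CompactSpace Y]
    (f : X → Y) (hf : Continuous f) (hne : ∀ x x' : X, dist (f x) (f x') ≤ dist x x')
    (n : ℕ) (hn : 1 ≤ n)
    (μ ν : C(X, ℝ) → ℝ) (hμ : IsIdemMeasure μ) (hν : IsIdemMeasure ν) :
    dHat n (fun φ : C(Y, ℝ) => μ (φ.comp ⟨f, hf⟩))
        (fun φ : C(Y, ℝ) => ν (φ.comp ⟨f, hf⟩)) ≤ dHat n μ ν := by
  -- X is nonempty, otherwise μ contradicts normalization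
  have hX : Nonempty X := by
    by_contra h
    rw [not_nonempty_iff] at h
    have h01 : (ContinuousMap.const X (0:ℝ)) = ContinuousMap.const X 1 := by
      ext x; exact absurd trivial (h.false x).elim
    have := hμ.1 0
    rw [h01, hμ.1 1] at this
    norm_num at this
  obtain ⟨x0⟩ := hX
  set M : ℝ := (n : ℝ) * Metric.diam (Set.univ : Set X) with hM
  -- bound: for φ ∈ nLip X n, |μ φ - ν φ| ≤ 2 M
  have key : ∀ φ ∈ nLip X n, |μ φ - ν φ| ≤ 2 * M := by
    intro φ hφ
    set c := φ x0 with hc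
    have hbounds : ∀ x : X, c - M ≤ φ x ∧ φ x ≤ c + M := by
      intro x
      have hd : dist x x0 ≤ Metric.diam (Set.univ : Set X) :=
        Metric.dist_le_diam_of_mem (isCompact_univ.isBounded) trivial trivial
      have h1 : |φ x - φ x0| ≤ (n : ℝ) * dist x x0 := hφ x x0
      have h2 : (n : ℝ) * dist x x0 ≤ M := by
        rw [hM]
        exact mul_le_mul_of_nonneg_left hd (by positivity)
      have := abs_le.mp (h1.trans h2)
      constructor <;> linarith [this.1, this.2]
    have hμb := idem_between hμ (φ := φ) (a := c - M) (b := c + M)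
      (fun x => (hbounds x).1) (fun x => (hbounds x).2)
    have hνb := idem_between hν (φ := φ) (a := c - M) (b := c + M)
      (fun x => (hbounds x).1) (fun x => (hbounds x).2)
    rw [abs_le]
    constructor <;> linarith [hμb.1, hμb.2, hνb.1, hνb.2]
  have hBdd : BddAbove {r : ℝ | ∃ φ ∈ nLip X n, r = |μ φ - ν φ|} := by
    refine ⟨2 * M, ?_⟩
    rintro r ⟨φ, hφ, rfl⟩
    exact key φ hφ
  apply csSup_le_csSup hBdd
  · -- left set nonempty: φ = 0
    refine ⟨|μ ((0 : C(Y, ℝ)).comp ⟨f, hf⟩) - ν ((0 : C(Y, ℝ)).comp ⟨f, hf⟩)|,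
      (0 : C(Y, ℝ)), ?_, rfl⟩
    intro x y
    simp [nLip]
    positivity
  · -- subset
    rintro r ⟨φ, hφ, rfl⟩
    refine ⟨φ.comp ⟨f, hf⟩, ?_, rfl⟩
    intro x y
    calc |φ (f x) - φ (f y)| ≤ (n : ℝ) * dist (f x) (f y) := hφ (f x) (f y)
      _ ≤ (n : ℝ) * dist x y := mul_le_mul_of_nonneg_left (hne x y) (by positivity)
end

section
/- Let X be a compact Hausdorff space and μ₀ ∈ I(X). Then the map h : I(X) × [−∞, 0] → I(X) defined by h(μ, λ)(φ) = the real number max(μ(φ), λ + μ₀(φ)) computed in the extended reals (so h(μ, −∞) = μ and h(μ, 0) = μ ⊕ μ₀) is continuous, where I(X) carries the weak* topology and [−∞, 0] ⊆ ℝ ∪ {−∞} carries the order topology. -/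
/-! For `λ ≤ 0` the functional `max(μ, λ + μ₀)` is the idempotent sum `μ ⊕ (λ ⊙ μ₀)`; the bound
`λ ≤ 0` keeps it normalized. Continuity is checked one coordinate `φ` at a time: there the map
is `(a, λ) ↦ max(a, λ + μ₀ φ)`, which is continuous on `ℝ × [−∞, ∞)` because `EReal` addition
is continuous away from `⊥ + ⊤`, and its values lie in `ℝ`, where `toReal` is continuous. -/

theorem IsIdemMeasure.max_const_add {X : Type*} [TopologicalSpace X]
    {μ μ₀ : C(X, ℝ) → ℝ} (hμ : IsIdemMeasure μ) (hμ₀ : IsIdemMeasure μ₀) {l : ℝ} (hl : l ≤ 0) :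
    IsIdemMeasure fun φ => max (μ φ) (l + μ₀ φ) := by
  obtain ⟨hμ_const, hμ_add, hμ_sup⟩ := hμ
  obtain ⟨hμ₀_const, hμ₀_add, hμ₀_sup⟩ := hμ₀
  refine ⟨fun c => ?_, fun c φ => ?_, fun φ ψ => ?_⟩
  · simp only [hμ_const, hμ₀_const]
    exact max_eq_left (by linarith)
  · simp only [hμ_add, hμ₀_add]
    rw [add_left_comm, max_add_add_left]
  · simp only [hμ_sup, hμ₀_sup, ← max_add_add_left]
    exact max_max_max_comm _ _ _ _

theorem EReal.toReal_coe_sup_coe_add_coe (a l b : ℝ) :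
    ((a : EReal) ⊔ ((l : EReal) + b)).toReal = max a (l + b) := by
  rw [← EReal.coe_add, ← EReal.coe_strictMono.monotone.map_max, EReal.toReal_coe]

theorem EReal.continuousAt_toReal_coe_sup_add_coe {a : ℝ} {l : EReal} (hl : l ≠ ⊤) (b : ℝ) :
    ContinuousAt (fun q : ℝ × EReal => ((q.1 : EReal) ⊔ (q.2 + b)).toReal) (a, l) := by
  have h_add : ContinuousAt (fun q : ℝ × EReal => q.2 + (b : EReal)) (a, l) :=
    (EReal.continuousAt_add (Or.inl hl) (Or.inr (EReal.coe_ne_top b))).comp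
      (continuous_snd.prodMk continuous_const).continuousAt
  have h_sup := (continuous_coe_real_ereal.comp continuous_fst).continuousAt.max h_add
  have h_ne_bot : (a : EReal) ⊔ (l + b) ≠ ⊥ := ne_bot_of_le_ne_bot (EReal.coe_ne_bot a) le_sup_left
  have h_ne_top : (a : EReal) ⊔ (l + b) ≠ ⊤ :=
    (max_lt (EReal.coe_lt_top a) (EReal.add_ne_top hl (EReal.coe_ne_top b)).lt_top).ne
  exact (EReal.tendsto_toReal h_ne_top h_ne_bot).comp h_sup

theorem statement8_general {X : Type*} [TopologicalSpace X]
    (μ₀ : C(X, ℝ) → ℝ) (hμ₀ : IsIdemMeasure μ₀) :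
    (∀ (μ : IdemMeasure X) (lam : Set.Iic (0 : EReal)),
      IsIdemMeasure (fun φ : C(X, ℝ) =>
        ((μ.val φ : EReal) ⊔ ((lam : EReal) + (μ₀ φ : EReal))).toReal)) ∧
    Continuous (fun p : IdemMeasure X × Set.Iic (0 : EReal) =>
      (fun φ : C(X, ℝ) =>
        ((p.1.val φ : EReal) ⊔ ((p.2 : EReal) + (μ₀ φ : EReal))).toReal : C(X, ℝ) → ℝ)) := by
  refine ⟨fun μ ⟨lam, hlam⟩ => ?_, continuous_pi fun φ => continuous_iff_continuousAt.2 fun p => ?_⟩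
  · induction lam using EReal.rec with
    | bot => simpa using μ.2
    | coe l =>
      simp only [EReal.toReal_coe_sup_coe_add_coe]
      exact μ.2.max_const_add hμ₀ (EReal.coe_le_coe_iff.1 hlam)
    | top => simp at hlam
  · have h_ne_top : (p.2 : EReal) ≠ ⊤ := ne_top_of_le_ne_top EReal.zero_ne_top p.2.2
    exact (EReal.continuousAt_toReal_coe_sup_add_coe (a := p.1.val φ) h_ne_top (μ₀ φ)).comp
      (x := p) (((continuous_apply φ).comp (continuous_subtype_val.comp continuous_fst)).prodMk
        (continuous_subtype_val.comp continuous_snd)).continuousAt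

/-- For a compact Hausdorff space `X` and `μ₀ ∈ I(X)`, the map
`h : I(X) × [−∞, 0] → I(X)`, `h(μ, λ)(φ) = max(μ(φ), λ + μ₀(φ))` (computed in the extended
reals `ℝ ∪ {−∞}`, with `−∞ + r = −∞`), takes values in `I(X)` and is continuous, where `I(X)`
carries the weak* topology and `[−∞, 0] ⊆ ℝ ∪ {−∞}` the order topology. -/
theorem statement8 {X : Type*} [TopologicalSpace X] [CompactSpace X] [T2Space X]
    (μ₀ : C(X, ℝ) → ℝ) (hμ₀ : IsIdemMeasure μ₀) :
    (∀ (μ : IdemMeasure X) (lam : Set.Iic (0 : EReal)),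
      IsIdemMeasure (fun φ : C(X, ℝ) =>
        ((μ.val φ : EReal) ⊔ ((lam : EReal) + (μ₀ φ : EReal))).toReal)) ∧
    Continuous (fun p : IdemMeasure X × Set.Iic (0 : EReal) =>
      (fun φ : C(X, ℝ) =>
        ((p.1.val φ : EReal) ⊔ ((p.2 : EReal) + (μ₀ φ : EReal))).toReal : C(X, ℝ) → ℝ)) :=
  statement8_general μ₀ hμ₀
end

section
/- Let X be a compact metrizable space and let A be a nonempty closed max-plus convex subset of I(X), i.e., for all μ, ν ∈ A and all α, β ∈ ℝ ∪ {−∞} with max(α, β) = 0, the idempotent measure α⊙μ ⊕ β⊙ν belongs to A. Then A, with the subspace topology inherited from the weak* topology on I(X), is contractible. -/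
/-- The max-plus combination `α⊙μ ⊕ β⊙ν`: the functional
`φ ↦ max(α + μ(φ), β + ν(φ))`, computed in the extended reals `ℝ ∪ {−∞}` (with the
convention `−∞ + r = −∞`) and read off as a real number (which it is when `max(α, β) = 0`). -/
noncomputable def maxPlusComb {X : Type*} [TopologicalSpace X] (α β : EReal)
    (μ ν : C(X, ℝ) → ℝ) : C(X, ℝ) → ℝ :=
  fun φ => ((α + (μ φ : EReal)) ⊔ (β + (ν φ : EReal))).toReal

/-!
Fix `ν ∈ A`. With the weights `w t = min 0 (log 2t)`, which run from `−∞` at `t = 0` to `0` for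
`t ≥ 1/2` and satisfy `max (w (1 - t)) (w t) = 0`, the max-plus segment
`(t, μ) ↦ w (1 - t) ⊙ μ ⊕ w t ⊙ ν` stays in `A` and runs from `μ` to `ν`. It is jointly
continuous because addition on `EReal` is continuous at `(⊥, x)` for real `x`, so it contracts
`A` to `ν`.
-/

open EReal

lemma ContinuousMap.Homotopy.contractibleSpace_of_mapsTo {Y : Type*} [TopologicalSpace Y]
    {y : Y} (H : (ContinuousMap.id Y).Homotopy (ContinuousMap.const Y y)) {s : Set Y}
    (hy : y ∈ s) (hs : ∀ t, Set.MapsTo (fun x => H (t, x)) s s) :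
    ContractibleSpace s := by
  rw [contractible_iff_id_nullhomotopic]
  refine ⟨⟨y, hy⟩, ⟨?_⟩⟩
  exact
    { toFun := fun p => ⟨H (p.1, p.2), hs p.1 p.2.2⟩
      continuous_toFun := by fun_prop
      map_zero_left := fun x => Subtype.ext (H.apply_zero x)
      map_one_left := fun x => Subtype.ext (H.apply_one x) }

section MaxPlusComb

variable {X : Type*} [TopologicalSpace X] {α β : EReal}

lemma coe_toReal_sup_add (h : α ⊔ β = 0) (x y : ℝ) :
    (((α + x) ⊔ (β + y)).toReal : EReal) = (α + x) ⊔ (β + y) := by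
  have hα : α ≤ 0 := h ▸ le_sup_left
  have hβ : β ≤ 0 := h ▸ le_sup_right
  refine coe_toReal (ne_top_of_le_ne_top (coe_ne_top (max x y)) ?_) ?_
  · rw [coe_strictMono.monotone.map_max]
    exact sup_le_sup (by simpa using add_le_add_left hα (x : EReal))
      (by simpa using add_le_add_left hβ (y : EReal))
  · rcases max_eq_iff.mp h with ⟨rfl, -⟩ | ⟨rfl, -⟩ <;> simp

lemma coe_maxPlusComb (h : α ⊔ β = 0) (μ ν : C(X, ℝ) → ℝ) (φ : C(X, ℝ)) :
    (maxPlusComb α β μ ν φ : EReal) = (α + μ φ) ⊔ (β + ν φ) :=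
  coe_toReal_sup_add h _ _

lemma isIdemMeasure_maxPlusComb (h : α ⊔ β = 0) {μ ν : C(X, ℝ) → ℝ} (hμ : IsIdemMeasure μ)
    (hν : IsIdemMeasure ν) : IsIdemMeasure (maxPlusComb α β μ ν) := by
  obtain ⟨hμ_const, hμ_shift, hμ_sup⟩ := hμ
  obtain ⟨hν_const, hν_shift, hν_sup⟩ := hν
  refine ⟨fun c => ?_, fun c φ => ?_, fun φ ψ => ?_⟩ <;> apply coe_injective <;>
    rw [coe_maxPlusComb h]
  · rw [hμ_const, hν_const, max_add_add_right, h, zero_add]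
  · rw [hμ_shift, hν_shift, coe_add, coe_add, coe_add, coe_maxPlusComb h, add_left_comm α,
      add_left_comm β, max_add_add_left]
  · simp only [hμ_sup, hν_sup, coe_strictMono.monotone.map_max]
    rw [coe_maxPlusComb h, coe_maxPlusComb h,
      ← max_add_add_left, ← max_add_add_left, sup_sup_sup_comm]

@[simp]
lemma maxPlusComb_zero_bot (μ ν : C(X, ℝ) → ℝ) : maxPlusComb 0 ⊥ μ ν = μ := by
  funext φ
  simp [maxPlusComb]

@[simp]
lemma maxPlusComb_bot_zero (μ ν : C(X, ℝ) → ℝ) : maxPlusComb ⊥ 0 μ ν = ν := by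
  funext φ
  simp [maxPlusComb]

lemma Continuous.ereal_add_coe {Z : Type*} [TopologicalSpace Z] {a : Z → EReal} {f : Z → ℝ}
    (ha : Continuous a) (hf : Continuous f) : Continuous fun z => a z + (f z : EReal) :=
  continuous_iff_continuousAt.2 fun _ =>
    (continuousAt_add (.inr (coe_ne_bot _)) (.inr (coe_ne_top _))).comp
      (ha.prodMk (continuous_coe_iff.2 hf)).continuousAt

lemma continuous_maxPlusComb {Z : Type*} [TopologicalSpace Z] {a b : Z → EReal}
    {μ ν : Z → C(X, ℝ) → ℝ} (ha : Continuous a) (hb : Continuous b) (hμ : Continuous μ)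
    (hν : Continuous ν) (hab : ∀ z, a z ⊔ b z = 0) :
    Continuous fun z => maxPlusComb (a z) (b z) (μ z) (ν z) := by
  refine continuous_pi fun φ => continuous_coe_iff.1 ?_
  simp_rw [coe_maxPlusComb (hab _)]
  exact (ha.ereal_add_coe ((continuous_apply φ).comp hμ)).sup
    (hb.ereal_add_coe ((continuous_apply φ).comp hν))

end MaxPlusComb

noncomputable def maxPlusWeight (t : ℝ) : EReal :=
  min 0 (ENNReal.log (ENNReal.ofReal (2 * t)))

lemma continuous_maxPlusWeight : Continuous maxPlusWeight :=
  continuous_const.min <| ENNReal.continuous_log.comp <|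
    ENNReal.continuous_ofReal.comp (continuous_const.mul continuous_id)

@[simp]
lemma maxPlusWeight_zero : maxPlusWeight 0 = ⊥ := by
  simp [maxPlusWeight]

lemma maxPlusWeight_le_zero (t : ℝ) : maxPlusWeight t ≤ 0 :=
  min_le_left _ _

lemma maxPlusWeight_of_half_le {t : ℝ} (ht : 1 / 2 ≤ t) : maxPlusWeight t = 0 :=
  min_eq_left <| ENNReal.zero_le_log_iff.2 <| ENNReal.one_le_ofReal.2 (by linarith)

@[simp]
lemma maxPlusWeight_one : maxPlusWeight 1 = 0 :=
  maxPlusWeight_of_half_le (by norm_num)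

lemma maxPlusWeight_one_sub_sup (t : ℝ) : maxPlusWeight (1 - t) ⊔ maxPlusWeight t = 0 := by
  rcases le_total t (1 / 2) with ht | ht
  · rw [maxPlusWeight_of_half_le (by linarith), sup_eq_left.2 (maxPlusWeight_le_zero t)]
  · rw [maxPlusWeight_of_half_le ht, sup_eq_right.2 (maxPlusWeight_le_zero _)]

noncomputable def IdemMeasure.maxPlusContraction {X : Type*} [TopologicalSpace X]
    (ν : IdemMeasure X) :
    (ContinuousMap.id (IdemMeasure X)).Homotopy (ContinuousMap.const (IdemMeasure X) ν) where
  toFun p := ⟨maxPlusComb (maxPlusWeight (1 - p.1)) (maxPlusWeight p.1) p.2.1 ν.1,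
    isIdemMeasure_maxPlusComb (maxPlusWeight_one_sub_sup _) p.2.2 ν.2⟩
  continuous_toFun := by
    refine Continuous.subtype_mk (continuous_maxPlusComb ?_ ?_ ?_ continuous_const
      fun _ => maxPlusWeight_one_sub_sup _) _
    · exact continuous_maxPlusWeight.comp (by fun_prop)
    · exact continuous_maxPlusWeight.comp (by fun_prop)
    · fun_prop
  map_zero_left μ := by ext1; simp
  map_one_left μ := by ext1; simp

theorem statement9_general {X : Type*} [TopologicalSpace X]
    (A : Set (IdemMeasure X)) (hne : A.Nonempty)
    (hconv : ∀ μ ∈ A, ∀ ν ∈ A, ∀ α β : EReal, α ⊔ β = 0 →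
      ∀ τ : IdemMeasure X, τ.val = maxPlusComb α β μ.val ν.val → τ ∈ A) :
    ContractibleSpace A := by
  obtain ⟨ν, hν⟩ := hne
  exact (IdemMeasure.maxPlusContraction ν).contractibleSpace_of_mapsTo hν fun t μ hμ =>
    hconv μ hμ ν hν _ _ (maxPlusWeight_one_sub_sup t) _ rfl

/-- Let `X` be a compact metrizable space and `A` a nonempty closed
max-plus convex subset of `I(X)` (closed under all combinations `α⊙μ ⊕ β⊙ν` with
`max(α, β) = 0`). Then `A`, with the subspace topology inherited from the weak* topology,
is contractible. -/
theorem statement9 {X : Type*} [TopologicalSpace X] [CompactSpace X]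
    [TopologicalSpace.MetrizableSpace X]
    (A : Set (IdemMeasure X)) (hne : A.Nonempty) (hcl : IsClosed A)
    (hconv : ∀ μ ∈ A, ∀ ν ∈ A, ∀ α β : EReal, α ⊔ β = 0 →
      ∀ τ : IdemMeasure X, τ.val = maxPlusComb α β μ.val ν.val → τ ∈ A) :
    ContractibleSpace A :=
  statement9_general A hne hconv
end
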